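/- arXiv:1610.07582 — 9 statements merged into one kernel-verified Lean document; each statement's English description precedes it below -/
import Mathlib

section
/- Let u'_1,…,u'_N and u''_1,…,u''_M be formal power series in one variable ε over ℂ, and suppose there are matrices a' = (a'_{ij}) of size N×M and a'' = (a''_{ji}) of size M×N with formal power series entries such that u''_j = Σ_{i=1}^N u'_i·a'_{ij} for every j and u'_i = Σ_{j=1}^M u''_j·a''_{ji} for every i. Assume that u'_i = ε^{k'}·f_i for every i and u''_j = ε^{k''}·g_j for every j, where f_i, g_j are formal power series and the vectors p' = (f_1(0),…,f_N(0)) ∈ ℂ^N and p'' = (g_1(0),…,g_M(0)) ∈ ℂ^M of constant terms are both nonzero. Then k' = k'', and moreover p''_j = Σ_{i=1}^N p'_i·a'_{ij}(0) for every j and p'_i = Σ_{j=1}^M p''_j·a''_{ji}(0) for every i, where a'_{ij}(0), a''_{ji}(0) denote constant terms. -/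
/-!
Each family is a combination of the other, so `X ^ k'` divides every `u''ⱼ` and `X ^ k''` every
`u'ᵢ`; comparing coefficients at a nonzero constant term forces `k' = k''`. Once the exponents
agree, the power of `X` cancels (it is not a zero divisor), and taking constant terms in
`g = f ⬝ a'` and `f = g ⬝ a''` gives the relations between `p'` and `p''`.
-/

open PowerSeries

namespace PowerSeries

variable {R : Type*} [Semiring R]

theorem le_of_X_pow_mul_eq_X_pow_mul {k m : ℕ} {g h : R⟦X⟧} (hgh : X ^ m * g = X ^ k * h)
    (hg : constantCoeff g ≠ 0) : k ≤ m := by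
  by_contra! hmk
  have := congrArg (coeff m) hgh
  rw [coeff_X_pow_mul', coeff_X_pow_mul', if_pos le_rfl, if_neg hmk.not_ge, Nat.sub_self,
    coeff_zero_eq_constantCoeff_apply] at this
  exact hg this

variable {ι : Type*} [Fintype ι] {k : ℕ} {u f a : ι → R⟦X⟧}

theorem sum_mul_eq_X_pow_mul (hu : ∀ i, u i = X ^ k * f i) :
    ∑ i, u i * a i = X ^ k * ∑ i, f i * a i := by
  simp only [hu, mul_assoc, Finset.mul_sum]

theorem le_of_X_pow_mul_eq_sum {m : ℕ} {g : R⟦X⟧} (hu : ∀ i, u i = X ^ k * f i)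
    (hg : X ^ m * g = ∑ i, u i * a i) (hg0 : constantCoeff g ≠ 0) : k ≤ m :=
  le_of_X_pow_mul_eq_X_pow_mul (hg.trans (sum_mul_eq_X_pow_mul hu)) hg0

theorem constantCoeff_eq_sum_of_X_pow_mul_eq_sum {g : R⟦X⟧} (hu : ∀ i, u i = X ^ k * f i)
    (hg : X ^ k * g = ∑ i, u i * a i) :
    constantCoeff g = ∑ i, constantCoeff (f i) * constantCoeff (a i) := by
  rw [X_pow_mul_cancel (hg.trans (sum_mul_eq_X_pow_mul hu)), map_sum]
  simp only [map_mul]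

end PowerSeries

/-- If two finite families of formal power series `u'` and `u''` over `ℂ`
generate each other via matrices `a'`, `a''` of power series, and
`u'ᵢ = ε^k' · fᵢ`, `u''ⱼ = ε^k'' · gⱼ` with nonzero vectors of constant terms
`p' = (fᵢ(0))ᵢ`, `p'' = (gⱼ(0))ⱼ`, then `k' = k''`, `p''ⱼ = Σᵢ p'ᵢ · a'ᵢⱼ(0)`
and `p'ᵢ = Σⱼ p''ⱼ · a''ⱼᵢ(0)`. -/
theorem stmt_0 (N M : ℕ)
    (u' : Fin N → PowerSeries ℂ) (u'' : Fin M → PowerSeries ℂ)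
    (a' : Fin N → Fin M → PowerSeries ℂ) (a'' : Fin M → Fin N → PowerSeries ℂ)
    (h' : ∀ j, u'' j = ∑ i, u' i * a' i j)
    (h'' : ∀ i, u' i = ∑ j, u'' j * a'' j i)
    (k' k'' : ℕ) (f : Fin N → PowerSeries ℂ) (g : Fin M → PowerSeries ℂ)
    (hf : ∀ i, u' i = PowerSeries.X ^ k' * f i)
    (hg : ∀ j, u'' j = PowerSeries.X ^ k'' * g j)
    (hp' : (fun i => PowerSeries.constantCoeff (f i)) ≠ (0 : Fin N → ℂ))
    (hp'' : (fun j => PowerSeries.constantCoeff (g j)) ≠ (0 : Fin M → ℂ)) :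
    k' = k'' ∧
    (∀ j, PowerSeries.constantCoeff (g j) =
        ∑ i, PowerSeries.constantCoeff (f i) * PowerSeries.constantCoeff (a' i j)) ∧
    (∀ i, PowerSeries.constantCoeff (f i) =
        ∑ j, PowerSeries.constantCoeff (g j) * PowerSeries.constantCoeff (a'' j i)) := by
  obtain ⟨i₀, hi₀⟩ := Function.ne_iff.mp hp'
  obtain ⟨j₀, hj₀⟩ := Function.ne_iff.mp hp''
  obtain rfl : k' = k'' := le_antisymm
    (le_of_X_pow_mul_eq_sum hf ((hg j₀).symm.trans (h' j₀)) hj₀)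
    (le_of_X_pow_mul_eq_sum hg ((hf i₀).symm.trans (h'' i₀)) hi₀)
  exact ⟨rfl, fun j => constantCoeff_eq_sum_of_X_pow_mul_eq_sum hf ((hg j).symm.trans (h' j)),
    fun i => constantCoeff_eq_sum_of_X_pow_mul_eq_sum hg ((hf i).symm.trans (h'' i))⟩
end

section
/- In ℂ⁶ with coordinates (λ₁,λ₂,λ₃,λ₄,λ₅,λ₆), the common zero set of the Kapteyn–Bautin polynomials v₁, v₂, v₃, v₄ equals I₁ ∪ I₂ ∪ I₃ ∪ I₄, where I₁ = {λ₁ = 0, λ₃ − λ₆ = 0}, I₂ = {λ₁ = 0, λ₂ = 0, λ₅ = 0}, I₃ = {λ₁ = 0, λ₄ = 0, λ₅ = 0}, and I₄ = {λ₁ = 0, λ₅ = 0, λ₄ + 5λ₃ − 5λ₆ = 0, λ₃λ₆ − 2λ₆² − λ₂² = 0}. -/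
open MvPolynomial

/-- In `ℂ⁶` with coordinates `(λ₁,…,λ₆)` (here `l 0 = λ₁, …, l 5 = λ₆`),
the common zero set of the Kapteyn–Bautin polynomials
`v₁ = λ₁`, `v₂ = λ₅(λ₃−λ₆)`, `v₃ = λ₂λ₄(λ₃−λ₆)(λ₄+5λ₃−5λ₆)`,
`v₄ = λ₂λ₄(λ₃−λ₆)²(λ₃λ₆−2λ₆²−λ₂²)` equals `I₁ ∪ I₂ ∪ I₃ ∪ I₄`. -/
theorem stmt_3 :
    {l : Fin 6 → ℂ |
        eval l (X 0 : MvPolynomial (Fin 6) ℂ) = 0 ∧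
        eval l (X 4 * (X 2 - X 5) : MvPolynomial (Fin 6) ℂ) = 0 ∧
        eval l (X 1 * X 3 * (X 2 - X 5) * (X 3 + 5 * X 2 - 5 * X 5) :
          MvPolynomial (Fin 6) ℂ) = 0 ∧
        eval l (X 1 * X 3 * (X 2 - X 5) ^ 2 * (X 2 * X 5 - 2 * X 5 ^ 2 - X 1 ^ 2) :
          MvPolynomial (Fin 6) ℂ) = 0} =
      {l : Fin 6 → ℂ | l 0 = 0 ∧ l 2 - l 5 = 0} ∪
      {l : Fin 6 → ℂ | l 0 = 0 ∧ l 1 = 0 ∧ l 4 = 0} ∪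
      {l : Fin 6 → ℂ | l 0 = 0 ∧ l 3 = 0 ∧ l 4 = 0} ∪
      {l : Fin 6 → ℂ | l 0 = 0 ∧ l 4 = 0 ∧ l 3 + 5 * l 2 - 5 * l 5 = 0 ∧
        l 2 * l 5 - 2 * l 5 ^ 2 - l 1 ^ 2 = 0} := by
  ext l
  simp only [Set.mem_setOf_eq, Set.mem_union, map_mul, map_sub, map_add, map_pow,
    map_ofNat, eval_X]
  constructor
  · rintro ⟨h0, h2, h3, h4⟩
    simp only [mul_eq_zero, pow_eq_zero_iff, OfNat.ofNat_ne_zero, ne_eq,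
      not_false_eq_true] at h2 h3 h4
    tauto
  · rintro (((⟨h0, hd⟩ | ⟨h0, h1, h4⟩) | ⟨h0, h3, h4⟩) | ⟨h0, h4, hP, hQ⟩) <;>
      refine ⟨h0, ?_, ?_, ?_⟩ <;> simp [*]
end

section
/- Let λ* = (λ₁*,…,λ₆*) ∈ ℂ⁶ satisfy λ₁* = 0 and λ₃* = λ₆*, and assume either λ₅* ≠ 0, or both λ₂* ≠ 0 and λ₄* ≠ 0 (i.e. λ* is a smooth point of the center set lying on I₁ only). Then the ideal of ℂ[λ₁,…,λ₆] generated by the Kapteyn–Bautin polynomials v₁, v₂, v₃, v₄ and the ideal generated by λ₁ and λ₃ − λ₆ coincide locally at λ*. -/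
/-!
Both generators of `(λ₁, λ₃ − λ₆)` are, up to a factor that is a unit near `λ*`, Bautin
polynomials: `v₁ = λ₁`, and `λ₃ − λ₆` divides `v₂ = λ₅ (λ₃ − λ₆)` and
`v₃ = λ₂λ₄(λ₄ + 5λ₃ − 5λ₆) (λ₃ − λ₆)`, whose cofactors are `λ₅` and
`λ₂λ₄(λ₄ + 5λ₃ − 5λ₆)`; on `λ₃ = λ₆` the latter takes the value `λ₂λ₄²`. Conversely every
`vᵢ` lies in `(λ₁, λ₃ − λ₆)`.
-/

open MvPolynomial

/-- The multiplicative set of polynomials not vanishing at `p`, i.e. the complement of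
the maximal ideal of polynomials vanishing at `p`. -/
def nonVanishing (K : Type*) [Field K] (p : Fin 6 → K) :
    Submonoid (MvPolynomial (Fin 6) K) where
  carrier := {f | eval p f ≠ 0}
  mul_mem' := by
    intro a b ha hb
    simp only [Set.mem_setOf_eq, map_mul] at ha hb ⊢
    exact mul_ne_zero ha hb
  one_mem' := by simp

/-- Two ideals of `K[λ₁,…,λ₆]` coincide locally at `p` if their extensions to the
localization of the polynomial ring at the maximal ideal of polynomials vanishing at `p`
(equivalently, the localization inverting all polynomials not vanishing at `p`) are equal. -/
def coincideLocally (K : Type*) [Field K] (p : Fin 6 → K)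
    (I J : Ideal (MvPolynomial (Fin 6) K)) : Prop :=
  Ideal.map (algebraMap (MvPolynomial (Fin 6) K) (Localization (nonVanishing K p))) I =
  Ideal.map (algebraMap (MvPolynomial (Fin 6) K) (Localization (nonVanishing K p))) J

/-- The Bautin ideal of the Kapteyn normal form, generated by the Kapteyn–Bautin
polynomials `v₁ = λ₁`, `v₂ = λ₅(λ₃−λ₆)`, `v₃ = λ₂λ₄(λ₃−λ₆)(λ₄+5λ₃−5λ₆)`,
`v₄ = λ₂λ₄(λ₃−λ₆)²(λ₃λ₆−2λ₆²−λ₂²)`, where `X 0 = λ₁, …, X 5 = λ₆`. -/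
noncomputable def bautinIdeal (K : Type*) [Field K] : Ideal (MvPolynomial (Fin 6) K) :=
  Ideal.span {X 0, X 4 * (X 2 - X 5),
    X 1 * X 3 * (X 2 - X 5) * (X 3 + 5 * X 2 - 5 * X 5),
    X 1 * X 3 * (X 2 - X 5) ^ 2 * (X 2 * X 5 - 2 * X 5 ^ 2 - X 1 ^ 2)}

theorem Ideal.map_algebraMap_eq_map_span {R S : Type*} [CommRing R] [CommRing S] [Algebra R S]
    (M : Submonoid R) [IsLocalization M S] {I : Ideal R} {s : Set R}
    (hle : I ≤ Ideal.span s) (hmul : ∀ x ∈ s, ∃ m ∈ M, m * x ∈ I) :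
    Ideal.map (algebraMap R S) I = Ideal.map (algebraMap R S) (Ideal.span s) := by
  refine le_antisymm (Ideal.map_mono hle) ?_
  rw [Ideal.map_le_iff_le_comap, Ideal.span_le]
  intro x hx
  obtain ⟨m, hm, hmx⟩ := hmul x hx
  have hunit : IsUnit (algebraMap R S m) := IsLocalization.map_units S ⟨m, hm⟩
  rw [SetLike.mem_coe, Ideal.mem_comap, ← Ideal.unit_mul_mem_iff_mem _ hunit, ← map_mul]
  exact Ideal.mem_map_of_mem _ hmx

section Bautin

variable {K : Type*} [Field K]

theorem bautinIdeal_le_span :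
    bautinIdeal K ≤ Ideal.span {X 0, X 2 - X 5} := by
  have h0 : (X 0 : MvPolynomial (Fin 6) K) ∈ Ideal.span {X 0, X 2 - X 5} :=
    Ideal.subset_span (by simp)
  have h25 : (X 2 - X 5 : MvPolynomial (Fin 6) K) ∈ Ideal.span {X 0, X 2 - X 5} :=
    Ideal.subset_span (by simp)
  rw [bautinIdeal, Ideal.span_le]
  rintro f (rfl | rfl | rfl | rfl)
  · exact h0
  · exact Ideal.mul_mem_left _ _ h25
  · exact Ideal.mul_mem_right _ _ (Ideal.mul_mem_left _ _ h25)
  · rw [pow_two, ← mul_assoc]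
    exact Ideal.mul_mem_right _ _ (Ideal.mul_mem_left _ _ h25)

theorem exists_nonVanishing_mul_sub_mem_bautinIdeal {p : Fin 6 → K} (h25 : p 2 = p 5)
    (hsmooth : p 4 ≠ 0 ∨ (p 1 ≠ 0 ∧ p 3 ≠ 0)) :
    ∃ c ∈ nonVanishing K p, c * (X 2 - X 5) ∈ bautinIdeal K := by
  rcases hsmooth with h4 | ⟨h1, h3⟩
  · exact ⟨X 4, by simpa [nonVanishing] using h4, Ideal.subset_span (by simp)⟩
  · refine ⟨X 1 * X 3 * (X 3 + 5 * X 2 - 5 * X 5), ?_, ?_⟩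
    · have hval : eval p (X 1 * X 3 * (X 3 + 5 * X 2 - 5 * X 5)) = p 1 * p 3 * p 3 := by
        simp only [map_mul, map_sub, map_add, map_ofNat, eval_X, h25]
        ring
      change eval p _ ≠ 0
      rw [hval]
      exact mul_ne_zero (mul_ne_zero h1 h3) h3
    · have hv₃ : X 1 * X 3 * (X 3 + 5 * X 2 - 5 * X 5) * (X 2 - X 5) =
          (X 1 * X 3 * (X 2 - X 5) * (X 3 + 5 * X 2 - 5 * X 5) : MvPolynomial (Fin 6) K) := by
        ring
      rw [hv₃]
      exact Ideal.subset_span (by simp)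

end Bautin

theorem stmt_4_general (l1 l2 l3 l4 l5 l6 : ℂ)
    (h36 : l3 = l6)
    (hsmooth : l5 ≠ 0 ∨ (l2 ≠ 0 ∧ l4 ≠ 0)) :
    coincideLocally ℂ ![l1, l2, l3, l4, l5, l6]
      (bautinIdeal ℂ)
      (Ideal.span {X 0, X 2 - X 5}) := by
  refine Ideal.map_algebraMap_eq_map_span (nonVanishing ℂ ![l1, l2, l3, l4, l5, l6])
    bautinIdeal_le_span ?_
  rintro f (rfl | rfl)
  · exact ⟨1, one_mem _, by rw [one_mul]; exact Ideal.subset_span (by simp)⟩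
  · exact exists_nonVanishing_mul_sub_mem_bautinIdeal h36 hsmooth

/-- at a smooth point `λ*` of the center set lying on `I₁` only
(`λ₁* = 0`, `λ₃* = λ₆*`, and `λ₅* ≠ 0` or (`λ₂* ≠ 0` and `λ₄* ≠ 0`)), the Bautin ideal
coincides locally at `λ*` with the ideal `(λ₁, λ₃ − λ₆)`. -/
theorem stmt_4 (l1 l2 l3 l4 l5 l6 : ℂ)
    (h1 : l1 = 0) (h36 : l3 = l6)
    (hsmooth : l5 ≠ 0 ∨ (l2 ≠ 0 ∧ l4 ≠ 0)) :
    coincideLocally ℂ ![l1, l2, l3, l4, l5, l6]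
      (bautinIdeal ℂ)
      (Ideal.span {X 0, X 2 - X 5}) :=
  stmt_4_general l1 l2 l3 l4 l5 l6 h36 hsmooth
end

section
/- Let λ* = (λ₁*,…,λ₆*) ∈ ℂ⁶ satisfy λ₁* = λ₂* = λ₅* = 0, λ₃* ≠ λ₆*, λ₄* ≠ 0, and assume either λ₄* + 5λ₃* − 5λ₆* ≠ 0 or λ₃*λ₆* − 2λ₆*² ≠ 0 (i.e. λ* is a smooth point of the center set lying on I₂ only). Then the ideal of ℂ[λ₁,…,λ₆] generated by the Kapteyn–Bautin polynomials v₁, v₂, v₃, v₄ and the ideal generated by λ₁, λ₂, λ₅ coincide locally at λ*. -/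
open MvPolynomial

/-!
Near `λ*` the factors `λ₃ − λ₆`, `λ₄` and one of `λ₄ + 5λ₃ − 5λ₆`, `λ₃λ₆ − 2λ₆² − λ₂²`
become units, so `v₂` and one of `v₃`, `v₄` are unit multiples of `λ₅` and `λ₂`; together with
`v₁ = λ₁` they generate `(λ₁, λ₂, λ₅)` locally, while every `vᵢ` lies in `(λ₁, λ₂, λ₅)` globally.
-/

section

variable {K : Type*} [Field K]

theorem coincideLocally_span_of_le {p : Fin 6 → K} {I : Ideal (MvPolynomial (Fin 6) K)}
    {s : Set (MvPolynomial (Fin 6) K)} (hle : I ≤ Ideal.span s)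
    (hs : ∀ a ∈ s, ∃ u, eval p u ≠ 0 ∧ u * a ∈ I) :
    coincideLocally K p I (Ideal.span s) := by
  refine le_antisymm (Ideal.map_mono hle) ?_
  rw [Ideal.map_span, Ideal.span_le]
  rintro _ ⟨a, ha, rfl⟩
  exact (IsLocalization.algebraMap_mem_map_algebraMap_iff (nonVanishing K p) _ I a).2 (hs a ha)

theorem bautinIdeal_le_span_X : bautinIdeal K ≤ Ideal.span {X 0, X 1, X 4} := by
  have hX : ∀ i ∈ ({0, 1, 4} : Set (Fin 6)), (X i : MvPolynomial (Fin 6) K) ∈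
      Ideal.span {X 0, X 1, X 4} := fun i hi ↦ Ideal.subset_span (by aesop)
  rw [bautinIdeal, Ideal.span_le]
  rintro f (rfl | rfl | rfl | rfl)
  · exact hX 0 (by simp)
  · exact Ideal.mul_mem_right _ _ (hX 4 (by simp))
  all_goals
    simp only [mul_assoc]
    exact Ideal.mul_mem_right _ _ (hX 1 (by simp))

theorem X_zero_mem_bautinIdeal : (X 0 : MvPolynomial (Fin 6) K) ∈ bautinIdeal K :=
  Ideal.subset_span (by simp)

theorem mul_X_four_mem_bautinIdeal : (X 2 - X 5) * X 4 ∈ bautinIdeal K :=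
  Ideal.subset_span (by simp [mul_comm])

theorem cofactor_v₃_mul_X_one_mem_bautinIdeal :
    X 3 * (X 2 - X 5) * (X 3 + 5 * X 2 - 5 * X 5) * X 1 ∈ bautinIdeal K := by
  refine Ideal.subset_span ?_
  simp only [Set.mem_insert_iff, Set.mem_singleton_iff]
  exact Or.inr (Or.inr (Or.inl (by ring)))

theorem cofactor_v₄_mul_X_one_mem_bautinIdeal :
    X 3 * (X 2 - X 5) ^ 2 * (X 2 * X 5 - 2 * X 5 ^ 2 - X 1 ^ 2) * X 1 ∈ bautinIdeal K := by
  refine Ideal.subset_span ?_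
  simp only [Set.mem_insert_iff, Set.mem_singleton_iff]
  exact Or.inr (Or.inr (Or.inr (by ring)))

end

theorem stmt_5_general (l1 l2 l3 l4 l5 l6 : ℂ)
    (h2 : l2 = 0)
    (h36 : l3 ≠ l6) (h4 : l4 ≠ 0)
    (hsmooth : l4 + 5 * l3 - 5 * l6 ≠ 0 ∨ l3 * l6 - 2 * l6 ^ 2 ≠ 0) :
    coincideLocally ℂ ![l1, l2, l3, l4, l5, l6]
      (bautinIdeal ℂ)
      (Ideal.span {X 0, X 1, X 4}) := by
  have h36' : l3 - l6 ≠ 0 := sub_ne_zero.mpr h36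
  refine coincideLocally_span_of_le bautinIdeal_le_span_X ?_
  simp only [Set.mem_insert_iff, Set.mem_singleton_iff, forall_eq_or_imp, forall_eq]
  refine ⟨⟨1, by simp, by simpa using X_zero_mem_bautinIdeal⟩, ?_,
    ⟨_, by simpa using h36', mul_X_four_mem_bautinIdeal⟩⟩
  rcases hsmooth with hv₃ | hv₄
  · exact ⟨_, by simp [h4, h36', hv₃], cofactor_v₃_mul_X_one_mem_bautinIdeal⟩
  · exact ⟨_, by simp [h2, h4, h36', hv₄], cofactor_v₄_mul_X_one_mem_bautinIdeal⟩

/-- at a smooth point `λ*` of the center set lying on `I₂` only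
(`λ₁* = λ₂* = λ₅* = 0`, `λ₃* ≠ λ₆*`, `λ₄* ≠ 0`, and `λ₄*+5λ₃*−5λ₆* ≠ 0` or
`λ₃*λ₆*−2λ₆*² ≠ 0`), the Bautin ideal coincides locally at `λ*` with the ideal
`(λ₁, λ₂, λ₅)`. -/
theorem stmt_5 (l1 l2 l3 l4 l5 l6 : ℂ)
    (h1 : l1 = 0) (h2 : l2 = 0) (h5 : l5 = 0)
    (h36 : l3 ≠ l6) (h4 : l4 ≠ 0)
    (hsmooth : l4 + 5 * l3 - 5 * l6 ≠ 0 ∨ l3 * l6 - 2 * l6 ^ 2 ≠ 0) :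
    coincideLocally ℂ ![l1, l2, l3, l4, l5, l6]
      (bautinIdeal ℂ)
      (Ideal.span {X 0, X 1, X 4}) :=
  stmt_5_general l1 l2 l3 l4 l5 l6 h2 h36 h4 hsmooth
end

section
/- Let λ* = (λ₁*,…,λ₆*) ∈ ℝ⁶ satisfy λ₁* = λ₄* = λ₅* = 0, λ₃* = λ₆*, and λ₂* ≠ 0 (i.e. λ* is a smooth point of the intersection I₁ ∩ I₃, not on I₂). Then the ideal of ℝ[λ₁,…,λ₆] generated by the Kapteyn–Bautin polynomials v₁, v₂, v₃, v₄ and the ideal generated by λ₁, λ₅(λ₃−λ₆), λ₄²(λ₃−λ₆), λ₄(λ₃−λ₆)² coincide locally at λ*. -/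
open MvPolynomial

/- At `λ*` the factors `λ₂` of `v₃` and `λ₂(λ₃λ₆ − 2λ₆² − λ₂²)` of `v₄` do not vanish
(the latter equals `−λ₂*(λ₆*² + λ₂*²)` there), so they become units in the local ring. Dropping
them leaves `v₃ ~ λ₄²(λ₃−λ₆) + 5λ₄(λ₃−λ₆)²` and `v₄ ~ λ₄(λ₃−λ₆)²`, and subtracting `5 v₄` from
`v₃` gives the second set of generators. -/

theorem Ideal.span_pair_unit_mul_add_mul {R : Type*} [CommRing R] {u v : R}
    (hu : IsUnit u) (hv : IsUnit v) (x y z : R) :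
    Ideal.span {u * (x + z * y), v * y} = Ideal.span {x, y} := by
  rw [Ideal.span_insert, Ideal.span_singleton_mul_left_unit hu,
    Ideal.span_singleton_mul_left_unit hv, ← Ideal.span_insert, Ideal.span_pair_add_mul_right]

theorem isUnit_algebraMap_nonVanishing {K : Type*} [Field K] {p : Fin 6 → K}
    {f : MvPolynomial (Fin 6) K} (hf : eval p f ≠ 0) :
    IsUnit (algebraMap (MvPolynomial (Fin 6) K) (Localization (nonVanishing K p)) f) :=
  IsLocalization.map_units _ (⟨f, hf⟩ : nonVanishing K p)

theorem bautinIdeal_eq_span_factored (K : Type*) [Field K] :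
    bautinIdeal K = Ideal.span {X 0, X 4 * (X 2 - X 5),
      X 1 * (X 3 ^ 2 * (X 2 - X 5) + 5 * (X 3 * (X 2 - X 5) ^ 2)),
      (X 1 * (X 2 * X 5 - 2 * X 5 ^ 2 - X 1 ^ 2)) * (X 3 * (X 2 - X 5) ^ 2)} := by
  unfold bautinIdeal
  congr 4
  · ring
  · congr 1
    ring

theorem stmt_8_general (l1 l2 l3 l4 l5 l6 : ℝ)
    (h36 : l3 = l6) (h2 : l2 ≠ 0) :
    coincideLocally ℝ ![l1, l2, l3, l4, l5, l6]
      (bautinIdeal ℝ)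
      (Ideal.span {X 0, X 4 * (X 2 - X 5), X 3 ^ 2 * (X 2 - X 5),
        X 3 * (X 2 - X 5) ^ 2}) := by
  subst h36
  set φ := algebraMap (MvPolynomial (Fin 6) ℝ)
    (Localization (nonVanishing ℝ ![l1, l2, l3, l4, l5, l3]))
  have hv₃_factor : IsUnit (φ (X 1)) := isUnit_algebraMap_nonVanishing (by simpa using h2)
  have hv₄_factor : IsUnit (φ (X 1 * (X 2 * X 5 - 2 * X 5 ^ 2 - X 1 ^ 2))) := by
    refine isUnit_algebraMap_nonVanishing ?_
    have : l3 * l3 - 2 * l3 ^ 2 - l2 ^ 2 < 0 := by nlinarith [sq_pos_of_ne_zero h2]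
    simpa using mul_ne_zero h2 this.ne
  unfold coincideLocally
  rw [bautinIdeal_eq_span_factored, Ideal.map_span, Ideal.map_span]
  simp only [Set.image_insert_eq, Set.image_singleton]
  rw [map_mul φ (X 1), map_add, map_mul φ 5, map_mul φ (X 1 * _), Ideal.span_insert,
    Ideal.span_insert, Ideal.span_pair_unit_mul_add_mul hv₃_factor hv₄_factor,
    ← Ideal.span_insert, ← Ideal.span_insert]

/-- at a smooth point `λ*` of `I₁ ∩ I₃` not on `I₂`
(`λ₁* = λ₄* = λ₅* = 0`, `λ₃* = λ₆*`, `λ₂* ≠ 0`, base field `ℝ`), the Bautin ideal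
coincides locally at `λ*` with the ideal `(λ₁, λ₅(λ₃−λ₆), λ₄²(λ₃−λ₆), λ₄(λ₃−λ₆)²)`. -/
theorem stmt_8 (l1 l2 l3 l4 l5 l6 : ℝ)
    (h1 : l1 = 0) (h4 : l4 = 0) (h5 : l5 = 0)
    (h36 : l3 = l6) (h2 : l2 ≠ 0) :
    coincideLocally ℝ ![l1, l2, l3, l4, l5, l6]
      (bautinIdeal ℝ)
      (Ideal.span {X 0, X 4 * (X 2 - X 5), X 3 ^ 2 * (X 2 - X 5),
        X 3 * (X 2 - X 5) ^ 2}) :=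
  stmt_8_general l1 l2 l3 l4 l5 l6 h36 h2
end

section
/- Let λ* = (λ₁*,…,λ₆*) ∈ ℝ⁶ satisfy λ₁* = λ₂* = λ₅* = λ₆* = 0, λ₄* = −5λ₃*, and λ₃* ≠ 0 (i.e. λ* is a nonzero point of the branch {λ₆ = 0} of I₂ ∩ I₄). Then the ideal of ℝ[λ₁,…,λ₆] generated by the Kapteyn–Bautin polynomials v₁, v₂, v₃, v₄ and the ideal generated by λ₁, λ₅, λ₂(λ₄+5λ₃−5λ₆), λ₂(λ₃λ₆−2λ₆²−λ₂²) coincide locally at λ*. -/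
open MvPolynomial

/-!
At `λ*` neither `λ₄ = -5λ₃*` nor `λ₃ - λ₆ = λ₃*` vanishes, so both become units in the local
ring. Up to such units, `v₂, v₃, v₄` are `λ₅`, `λ₂(λ₄+5λ₃−5λ₆)` and `λ₂(λ₃λ₆−2λ₆²−λ₂²)`.
-/

theorem IsLocalization.map_span_singleton_mul_of_mem {R : Type*} (S : Type*) [CommSemiring R]
    [CommSemiring S] [Algebra R S] {M : Submonoid R} [IsLocalization M S] {s : R} (hs : s ∈ M)
    (a : R) :
    Ideal.map (algebraMap R S) (Ideal.span {a * s}) =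
      Ideal.map (algebraMap R S) (Ideal.span {a}) := by
  rw [Ideal.map_span, Ideal.map_span, Set.image_singleton, Set.image_singleton, map_mul,
    Ideal.span_singleton_mul_right_unit (IsLocalization.map_units S ⟨s, hs⟩)]

theorem stmt_11_general (l1 l2 l3 l4 l5 l6 : ℝ)
    (h6 : l6 = 0)
    (h4 : l4 = -5 * l3) (h3 : l3 ≠ 0) :
    coincideLocally ℝ ![l1, l2, l3, l4, l5, l6]
      (bautinIdeal ℝ)
      (Ideal.span {X 0, X 4, X 1 * (X 3 + 5 * X 2 - 5 * X 5),
        X 1 * (X 2 * X 5 - 2 * X 5 ^ 2 - X 1 ^ 2)}) := by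
  subst h6 h4
  set M := nonVanishing ℝ ![l1, l2, l3, -5 * l3, l5, 0]
  have hX3 : (X 3 : MvPolynomial (Fin 6) ℝ) ∈ M := by
    show eval _ _ ≠ 0
    simpa using h3
  have hX2_sub_X5 : X 2 - X 5 ∈ M := by
    show eval _ _ ≠ 0
    simpa using h3
  have hv3 : (X 1 * X 3 : MvPolynomial (Fin 6) ℝ) * (X 2 - X 5) * (X 3 + 5 * X 2 - 5 * X 5) =
      X 1 * (X 3 + 5 * X 2 - 5 * X 5) * (X 3 * (X 2 - X 5)) := by ring
  have hv4 : (X 1 * X 3 : MvPolynomial (Fin 6) ℝ) * (X 2 - X 5) ^ 2 *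
        (X 2 * X 5 - 2 * X 5 ^ 2 - X 1 ^ 2) =
      X 1 * (X 2 * X 5 - 2 * X 5 ^ 2 - X 1 ^ 2) * (X 3 * (X 2 - X 5) ^ 2) := by ring
  rw [coincideLocally, bautinIdeal, hv3, hv4]
  simp only [Ideal.span_insert, Ideal.map_sup,
    IsLocalization.map_span_singleton_mul_of_mem _ hX2_sub_X5,
    IsLocalization.map_span_singleton_mul_of_mem _ (mul_mem hX3 hX2_sub_X5),
    IsLocalization.map_span_singleton_mul_of_mem _ (mul_mem hX3 (pow_mem hX2_sub_X5 2))]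

/-- at a nonzero point `λ*` of the branch `{λ₆ = 0}` of `I₂ ∩ I₄`
(`λ₁* = λ₂* = λ₅* = λ₆* = 0`, `λ₄* = −5λ₃*`, `λ₃* ≠ 0`, base field `ℝ`), the Bautin
ideal coincides locally at `λ*` with the ideal
`(λ₁, λ₅, λ₂(λ₄+5λ₃−5λ₆), λ₂(λ₃λ₆−2λ₆²−λ₂²))`. -/
theorem stmt_11 (l1 l2 l3 l4 l5 l6 : ℝ)
    (h1 : l1 = 0) (h2 : l2 = 0) (h5 : l5 = 0) (h6 : l6 = 0)
    (h4 : l4 = -5 * l3) (h3 : l3 ≠ 0) :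
    coincideLocally ℝ ![l1, l2, l3, l4, l5, l6]
      (bautinIdeal ℝ)
      (Ideal.span {X 0, X 4, X 1 * (X 3 + 5 * X 2 - 5 * X 5),
        X 1 * (X 2 * X 5 - 2 * X 5 ^ 2 - X 1 ^ 2)}) :=
  stmt_11_general l1 l2 l3 l4 l5 l6 h6 h4 h3
end

section
/- Let λ* = (λ₁*,…,λ₆*) ∈ ℝ⁶ satisfy λ₁* = λ₂* = λ₄* = λ₅* = 0 and λ₃* = λ₆* ≠ 0 (i.e. λ* is a nonzero point of the line I₁ ∩ I₂ ∩ I₃). Then the ideal of ℝ[λ₁,…,λ₆] generated by the Kapteyn–Bautin polynomials v₁, v₂, v₃, v₄ and the ideal generated by λ₁, λ₅(λ₃−λ₆), λ₂λ₄²(λ₃−λ₆), λ₂λ₄(λ₃−λ₆)² coincide locally at λ*. -/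
open MvPolynomial

/-!
With `w₃ = λ₂λ₄²(λ₃−λ₆)` and `w₄ = λ₂λ₄(λ₃−λ₆)²` one has `v₃ = w₃ + 5w₄` and
`v₄ = w₄ · (λ₃λ₆ − 2λ₆² − λ₂²)`. The last factor takes the value `−λ₆*² − λ₂*² < 0` at any
point with `λ₃* = λ₆* ≠ 0`, so it is a unit in the local ring there, and the pair `(v₃, v₄)`
generates the same ideal as `(w₃, w₄)`.
-/

theorem Ideal.span_pair_add_mul_mul_isUnit {S : Type*} [CommRing S] {u : S} (hu : IsUnit u)
    (c d e : S) : Ideal.span {c + e * d, d * u} = Ideal.span {c, d} := by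
  rw [Ideal.span_insert, Ideal.span_singleton_mul_right_unit hu, ← Ideal.span_insert,
    Ideal.span_pair_add_mul_right]

theorem sub_sub_sq_mem_nonVanishing {K : Type*} [Field K] [LinearOrder K]
    [IsStrictOrderedRing K] {p : Fin 6 → K} (h25 : p 2 = p 5) (h5 : p 5 ≠ 0) :
    X 2 * X 5 - 2 * X 5 ^ 2 - X 1 ^ 2 ∈ nonVanishing K p := by
  change eval p (X 2 * X 5 - 2 * X 5 ^ 2 - X 1 ^ 2) ≠ 0
  have : p 2 * p 5 - 2 * p 5 ^ 2 - p 1 ^ 2 < 0 := by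
    rw [h25]
    nlinarith [sq_pos_of_ne_zero h5, sq_nonneg (p 1)]
  simpa using this.ne

theorem Ideal.map_span_add_mul_mul_isUnit {R S : Type*} [CommRing R] [CommRing S]
    (f : R →+* S) {u : R} (hu : IsUnit (f u)) (a b c d e : R) :
    (Ideal.span {a, b, c + e * d, d * u}).map f = (Ideal.span {a, b, c, d}).map f := by
  simp only [Ideal.map_span, Set.image_insert_eq, Set.image_singleton, map_add, map_mul]
  rw [Ideal.span_insert, Ideal.span_insert, Ideal.span_pair_add_mul_mul_isUnit hu,
    ← Ideal.span_insert, ← Ideal.span_insert]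

theorem stmt_12_general (l1 l2 l3 l4 l5 l6 : ℝ)
    (h36 : l3 = l6) (h3 : l3 ≠ 0) :
    coincideLocally ℝ ![l1, l2, l3, l4, l5, l6]
      (bautinIdeal ℝ)
      (Ideal.span {X 0, X 4 * (X 2 - X 5), X 1 * X 3 ^ 2 * (X 2 - X 5),
        X 1 * X 3 * (X 2 - X 5) ^ 2}) := by
  have hu := IsLocalization.map_units (Localization (nonVanishing ℝ ![l1, l2, l3, l4, l5, l6]))
    ⟨_, sub_sub_sq_mem_nonVanishing (p := ![l1, l2, l3, l4, l5, l6]) h36 (h36 ▸ h3)⟩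
  have hv₃ : (X 1 * X 3 * (X 2 - X 5) * (X 3 + 5 * X 2 - 5 * X 5) : MvPolynomial (Fin 6) ℝ) =
      X 1 * X 3 ^ 2 * (X 2 - X 5) + 5 * (X 1 * X 3 * (X 2 - X 5) ^ 2) := by ring
  rw [coincideLocally, bautinIdeal, hv₃]
  exact Ideal.map_span_add_mul_mul_isUnit _ hu _ _ _ _ _

/-- at a nonzero point `λ*` of the line `I₁ ∩ I₂ ∩ I₃`
(`λ₁* = λ₂* = λ₄* = λ₅* = 0`, `λ₃* = λ₆* ≠ 0`, base field `ℝ`), the Bautin ideal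
coincides locally at `λ*` with the ideal
`(λ₁, λ₅(λ₃−λ₆), λ₂λ₄²(λ₃−λ₆), λ₂λ₄(λ₃−λ₆)²)`. -/
theorem stmt_12 (l1 l2 l3 l4 l5 l6 : ℝ)
    (h1 : l1 = 0) (h2 : l2 = 0) (h4 : l4 = 0) (h5 : l5 = 0)
    (h36 : l3 = l6) (h3 : l3 ≠ 0) :
    coincideLocally ℝ ![l1, l2, l3, l4, l5, l6]
      (bautinIdeal ℝ)
      (Ideal.span {X 0, X 4 * (X 2 - X 5), X 1 * X 3 ^ 2 * (X 2 - X 5),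
        X 1 * X 3 * (X 2 - X 5) ^ 2}) :=
  stmt_12_general l1 l2 l3 l4 l5 l6 h36 h3
end

section
/- Fix δ ∈ ℝ and let f₁, f₄, f₅, g be formal power series in one variable ε over ℝ with constant terms a₁, a₄, a₅, c respectively. Define λ₁ = ε³(ε+δ)f₁, λ₅ = ε²(ε+δ)f₅, λ₄ = ε(ε+δ)f₄, and let λ₃ − λ₆ = ε·g. Then each of the four power series w₁ = λ₁, w₂ = λ₅(λ₃−λ₆), w₃ = λ₄²(λ₃−λ₆), w₄ = λ₄(λ₃−λ₆)² has vanishing coefficients of ε⁰, ε¹, ε², and their coefficients of ε³ are respectively δ·a₁, δ·a₅·c, δ²·a₄²·c, δ·a₄·c². In particular, after dividing by δ ≠ 0, the projectivized leading-coefficient vector is [a₁ : a₅c : δ·a₄²c : a₄c²], which tends to [a₁ : a₅c : 0 : a₄c²] as δ → 0. -/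
open PowerSeries

/- Each generator is `X ^ 3` times a series whose constant term is the claimed coefficient, because
every factor `X + C δ` contributes `δ` to the constant term. -/

theorem PowerSeries.coeff_X_pow_mul_self {R : Type*} [Semiring R] (h : R⟦X⟧) (k : ℕ) :
    coeff k (X ^ k * h) = constantCoeff h := by
  simpa using coeff_X_pow_mul h k 0

theorem PowerSeries.coeff_of_eq_X_pow_mul {R : Type*} [Semiring R] {w h : R⟦X⟧} {k : ℕ}
    (hw : w = X ^ k * h) : (∀ n < k, coeff n w = 0) ∧ coeff k w = constantCoeff h :=
  ⟨X_pow_dvd_iff.mp ⟨h, hw⟩, hw ▸ coeff_X_pow_mul_self h k⟩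

/-- the order-4 arcs on `I₁ ∩ I₃` as limits of order-3 arcs.
With `λ₁ = ε³(ε+δ)f₁`, `λ₅ = ε²(ε+δ)f₅`, `λ₄ = ε(ε+δ)f₄`, `λ₃ − λ₆ = εg`, where
`f₁, f₄, f₅, g` have constant terms `a₁, a₄, a₅, c`, the local Bautin generators
`w₁ = λ₁`, `w₂ = λ₅(λ₃−λ₆)`, `w₃ = λ₄²(λ₃−λ₆)`, `w₄ = λ₄(λ₃−λ₆)²` have vanishing
coefficients of `ε⁰, ε¹, ε²`, and their coefficients of `ε³` are `δa₁`, `δa₅c`,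
`δ²a₄²c`, `δa₄c²`.  In particular, for `δ ≠ 0` the leading-coefficient vector is
`δ • (a₁, a₅c, δa₄²c, a₄c²)`, i.e. projectively `[a₁ : a₅c : δa₄²c : a₄c²]`, which
tends to `[a₁ : a₅c : 0 : a₄c²]` as `δ → 0`. -/
theorem stmt_16 (δ : ℝ) (f1 f4 f5 g : PowerSeries ℝ) (a1 a4 a5 c : ℝ)
    (hf1 : constantCoeff f1 = a1) (hf4 : constantCoeff f4 = a4)
    (hf5 : constantCoeff f5 = a5) (hg : constantCoeff g = c)
    (l1 l4 l5 d : PowerSeries ℝ)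
    (hl1 : l1 = X ^ 3 * (X + C δ) * f1)
    (hl5 : l5 = X ^ 2 * (X + C δ) * f5)
    (hl4 : l4 = X * (X + C δ) * f4)
    (hd : d = X * g) :
    (∀ n ≤ 2,
      coeff n l1 = 0 ∧
      coeff n (l5 * d) = 0 ∧
      coeff n (l4 ^ 2 * d) = 0 ∧
      coeff n (l4 * d ^ 2) = 0) ∧
    coeff 3 l1 = δ * a1 ∧
    coeff 3 (l5 * d) = δ * (a5 * c) ∧
    coeff 3 (l4 ^ 2 * d) = δ ^ 2 * (a4 ^ 2 * c) ∧
    coeff 3 (l4 * d ^ 2) = δ * (a4 * c ^ 2) ∧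
    (∀ e : ℝ, e ≠ 0 →
      (![e * a1, e * (a5 * c), e ^ 2 * (a4 ^ 2 * c), e * (a4 * c ^ 2)] : Fin 4 → ℝ) =
        e • ![a1, a5 * c, e * (a4 ^ 2 * c), a4 * c ^ 2]) ∧
    Filter.Tendsto (fun e : ℝ => (![a1, a5 * c, e * (a4 ^ 2 * c), a4 * c ^ 2] : Fin 4 → ℝ))
      (nhds 0) (nhds ![a1, a5 * c, 0, a4 * c ^ 2]) := by
  have hδ : constantCoeff (X + C δ : ℝ⟦X⟧) = δ := by simp
  have hw1 : l1 = X ^ 3 * ((X + C δ) * f1) := by rw [hl1]; ring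
  have hw2 : l5 * d = X ^ 3 * ((X + C δ) * f5 * g) := by rw [hl5, hd]; ring
  have hw3 : l4 ^ 2 * d = X ^ 3 * ((X + C δ) ^ 2 * f4 ^ 2 * g) := by rw [hl4, hd]; ring
  have hw4 : l4 * d ^ 2 = X ^ 3 * ((X + C δ) * f4 * g ^ 2) := by rw [hl4, hd]; ring
  obtain ⟨w1_low, w1_three⟩ := coeff_of_eq_X_pow_mul hw1
  obtain ⟨w2_low, w2_three⟩ := coeff_of_eq_X_pow_mul hw2
  obtain ⟨w3_low, w3_three⟩ := coeff_of_eq_X_pow_mul hw3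
  obtain ⟨w4_low, w4_three⟩ := coeff_of_eq_X_pow_mul hw4
  simp only [map_mul, map_pow, hδ, hf1, hf4, hf5, hg] at w1_three w2_three w3_three w4_three
  refine ⟨fun n hn => ⟨w1_low n (by omega), w2_low n (by omega), w3_low n (by omega),
    w4_low n (by omega)⟩, w1_three, by rw [w2_three, mul_assoc], by rw [w3_three, mul_assoc],
    by rw [w4_three, mul_assoc], fun e _ => ?_, ?_⟩
  · ext i
    fin_cases i <;> simp [sq, mul_assoc]
  · have hcont : Continuous fun e : ℝ =>
        (![a1, a5 * c, e * (a4 ^ 2 * c), a4 * c ^ 2] : Fin 4 → ℝ) := by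
      fun_prop
    simpa using hcont.tendsto 0
end

section
/- Let α ∈ ℝ and consider the polynomials f₂ = x² + 4y + 1 and f₃ = αx(x² + 6y) + 6y + 1 in ℝ[x,y]. Then both coefficients of the one-form ω₀ = 3f₃ df₂ − 2f₂ df₃ are polynomials of total degree at most 2; explicitly, 3f₃·(∂f₂/∂x) − 2f₂·(∂f₃/∂x) has total degree at most 2, and 3f₃·(∂f₂/∂y) − 2f₂·(∂f₃/∂y) has total degree at most 2. -/
open MvPolynomial

private lemma deg2_aux (a b c d e : ℝ) :
    ((C a * (X 0 * X 0) + C b * (X 1 * X 1) + C c * X 1 + C d * (X 0 * X 1) + C e * X 0 :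
      MvPolynomial (Fin 2) ℝ)).totalDegree ≤ 2 := by
  have hXX : ∀ (t : ℝ) (i j : Fin 2),
      (C t * (X i * X j) : MvPolynomial (Fin 2) ℝ).totalDegree ≤ 2 := by
    intro t i j
    refine (totalDegree_mul _ _).trans ?_
    simp [totalDegree_C, totalDegree_X]
    exact (totalDegree_mul _ _).trans (by simp [totalDegree_X])
  have hX : ∀ (t : ℝ) (i : Fin 2),
      (C t * X i : MvPolynomial (Fin 2) ℝ).totalDegree ≤ 2 := by
    intro t i
    refine (totalDegree_mul _ _).trans ?_
    simp [totalDegree_C, totalDegree_X]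
  refine (totalDegree_add _ _).trans (max_le ?_ (hX e 0))
  refine (totalDegree_add _ _).trans (max_le ?_ (hXX d 0 1))
  refine (totalDegree_add _ _).trans (max_le ?_ (hX c 1))
  exact (totalDegree_add _ _).trans (max_le (hXX a 0 0) (hXX b 1 1))


/-- for `f₂ = x² + 4y + 1` and `f₃ = αx(x²+6y) + 6y + 1` in `ℝ[x,y]`
(here `x = X 0`, `y = X 1`), both coefficients of the one-form
`ω₀ = 3f₃ df₂ − 2f₂ df₃` are polynomials of total degree at most `2`:
`3f₃·∂f₂/∂x − 2f₂·∂f₃/∂x` and `3f₃·∂f₂/∂y − 2f₂·∂f₃/∂y` have total degree `≤ 2`. -/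
theorem stmt_18 (α : ℝ) (f2 f3 : MvPolynomial (Fin 2) ℝ)
    (hf2 : f2 = X 0 ^ 2 + 4 * X 1 + 1)
    (hf3 : f3 = C α * X 0 * (X 0 ^ 2 + 6 * X 1) + 6 * X 1 + 1) :
    (3 * f3 * pderiv 0 f2 - 2 * f2 * pderiv 0 f3).totalDegree ≤ 2 ∧
    (3 * f3 * pderiv 1 f2 - 2 * f2 * pderiv 1 f3).totalDegree ≤ 2 := by
  subst hf2 hf3
  have e4 : (4 : MvPolynomial (Fin 2) ℝ) = C 4 := by rw [map_ofNat]
  have e6 : (6 : MvPolynomial (Fin 2) ℝ) = C 6 := by rw [map_ofNat]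
  constructor
  · have h1 : 3 * (C α * X 0 * (X 0 ^ 2 + 6 * X 1) + 6 * X 1 + 1) *
        pderiv 0 ((X 0 : MvPolynomial (Fin 2) ℝ) ^ 2 + 4 * X 1 + 1) -
        2 * ((X 0 : MvPolynomial (Fin 2) ℝ) ^ 2 + 4 * X 1 + 1) *
        pderiv 0 (C α * X 0 * (X 0 ^ 2 + 6 * X 1) + 6 * X 1 + 1) =
        C (-6*α) * (X 0 * X 0) + C (-48*α) * (X 1 * X 1) + C (-12*α) * X 1 +
        C 36 * (X 0 * X 1) + C 6 * X 0 := by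
      simp [e4, e6, pderiv_X, pderiv_C]
      simp only [map_ofNat, map_mul, map_neg]
      ring
    rw [h1]; exact deg2_aux _ _ _ _ _
  · have h2 : 3 * (C α * X 0 * (X 0 ^ 2 + 6 * X 1) + 6 * X 1 + 1) *
        pderiv 1 ((X 0 : MvPolynomial (Fin 2) ℝ) ^ 2 + 4 * X 1 + 1) -
        2 * ((X 0 : MvPolynomial (Fin 2) ℝ) ^ 2 + 4 * X 1 + 1) *
        pderiv 1 (C α * X 0 * (X 0 ^ 2 + 6 * X 1) + 6 * X 1 + 1) =
        C (-12) * (X 0 * X 0) + C 0 * (X 1 * X 1) + C 24 * X 1 +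
        C (24*α) * (X 0 * X 1) + C (-12*α) * X 0 := by
      simp [e4, e6, pderiv_X, pderiv_C]
      simp only [map_ofNat, map_mul, map_neg]
      ring
    rw [h2]; exact deg2_aux _ _ _ _ _
end
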